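/- Let G be a finite connected twin-free split graph. Then χ_rlid(G) ≤ ω(G) + 2, where ω(G) is the clique number of G. -/

import Mathlib

open SimpleGraph Set

variable {V : Type*}

/-- The closed neighborhood of a vertex. -/
def closedNbhd (G : SimpleGraph V) (v : V) : Set V := insert v (G.neighborSet v)

/-- A (not necessarily proper) coloring `c : V → Fin k` is a relaxed locally identifying coloring
(rlid-coloring) if any two adjacent vertices with distinct closed neighborhoods receive distinct
sets of colors on their closed neighborhoods. -/
def IsRlidColoring (G : SimpleGraph V) {k : ℕ} (c : V → Fin k) : Prop :=
  ∀ u v : V, G.Adj u v → closedNbhd G u ≠ closedNbhd G v →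
    c '' closedNbhd G u ≠ c '' closedNbhd G v

/-- The relaxed locally identifying chromatic number: the least `k` such that `G` admits an
rlid-coloring with `k` colors. -/
noncomputable def rlidChromNum (G : SimpleGraph V) : ℕ :=
  sInf {k : ℕ | ∃ c : V → Fin k, IsRlidColoring G c}

/-- A graph is twin-free if distinct vertices have distinct closed neighborhoods. -/
def TwinFree (G : SimpleGraph V) : Prop :=
  ∀ u v : V, closedNbhd G u = closedNbhd G v → u = v

/-- A split graph: the vertex set can be partitioned into a clique `K` and an independent
set (its complement). -/
def IsSplitGraph (G : SimpleGraph V) : Prop :=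
  ∃ K : Set V, G.IsClique K ∧ ∀ u ∈ Kᶜ, ∀ v ∈ Kᶜ, ¬ G.Adj u v

/-! Extend the clique of a split partition to a maximal clique `K`, so that every vertex of
the independent rest `S` misses some vertex of `K`. Twin-freeness makes the `S`-neighbourhoods
of the vertices of `K` pairwise distinct, so by Bondy's theorem some `T ⊆ S` with
`|T| ≤ |K| - 1` separates them by their traces on `T`. Colour each vertex of `W = T ∪ X` by
itself and all other vertices alike: an edge inside `K` is then separated by `T`, and an edge
`us` with `u ∈ K`, `s ∈ S` by `T` unless the trace of `u` lies in `{s}`, in which case a vertex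
of `X ⊆ K` not adjacent to `s` does it. Two such vertices suffice: two vertices of `K` with
disjoint `S`-neighbourhoods if they exist, and otherwise, with `T` chosen so that every trace
is nonempty, a vertex whose trace is a singleton `{e}` together with a non-neighbour of `e`.
This uses `|W| + 1 ≤ |K| + 2` colours. -/

open Finset

section SetSystem

variable {ι α : Type*} [DecidableEq α] {K : Finset ι} {f : ι → Finset α}

lemma card_image_inter_lt {T T' : Finset α} (hT : T ⊆ T') {i j : ι} (hi : i ∈ K) (hj : j ∈ K)
    (h : f i ∩ T = f j ∩ T) (h' : f i ∩ T' ≠ f j ∩ T') :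
    #(K.image (f · ∩ T)) < #(K.image (f · ∩ T')) := by
  have himage : K.image (f · ∩ T) = (K.image (f · ∩ T')).image (· ∩ T) := by
    rw [Finset.image_image]
    refine image_congr fun k _ => ?_
    simp only [Function.comp_apply, Finset.inter_assoc, Finset.inter_eq_right.2 hT]
  rw [himage]
  refine lt_of_le_of_ne card_image_le fun hcard => h' ?_
  refine card_image_iff.1 hcard (mem_image_of_mem _ hi) (mem_image_of_mem _ hj) ?_
  simpa only [Finset.inter_assoc, Finset.inter_eq_right.2 hT] using h

/-- A point distinguishing two members with equal traces splits a class of the partition of `K`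
by traces, so `#K - #classes` further points suffice. -/
lemma exists_separating_superset (hf : Set.InjOn f K) (T₀ : Finset α) :
    ∃ T, T₀ ⊆ T ∧ Set.InjOn (f · ∩ T) K ∧ #T + #(K.image (f · ∩ T₀)) ≤ #T₀ + #K := by
  induction hn : #K - #(K.image (f · ∩ T₀)) using Nat.strong_induction_on generalizing T₀ with
  | _ n ih =>
  have hle : #(K.image (f · ∩ T₀)) ≤ #K := card_image_le
  by_cases hinj : Set.InjOn (f · ∩ T₀) K
  · exact ⟨T₀, subset_rfl, hinj, by omega⟩
  obtain ⟨i, hi, j, hj, heq, hij⟩ : ∃ i ∈ K, ∃ j ∈ K, f i ∩ T₀ = f j ∩ T₀ ∧ i ≠ j := by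
    simpa [Set.InjOn] using hinj
  obtain ⟨x, hx⟩ : ∃ x, ¬(x ∈ f i ↔ x ∈ f j) := by
    simpa [Finset.ext_iff] using fun h => hij (hf hi hj h)
  have hxT₀ : x ∉ T₀ := fun hx₀ => hx <| by
    simpa [hx₀] using Finset.ext_iff.1 heq x
  have hne : f i ∩ insert x T₀ ≠ f j ∩ insert x T₀ := fun h => hx <| by
    simpa using Finset.ext_iff.1 h x
  have hlt := card_image_inter_lt (Finset.subset_insert x T₀) hi hj heq hne
  have hle' : #(K.image (f · ∩ insert x T₀)) ≤ #K := card_image_le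
  obtain ⟨T, hT, hinjT, hcard⟩ := ih _ (by omega) (insert x T₀) rfl
  refine ⟨T, (Finset.subset_insert x T₀).trans hT, hinjT, ?_⟩
  rw [card_insert_of_notMem hxT₀] at hcard
  omega

lemma exists_separating (hf : Set.InjOn f K) (hK : K.Nonempty) :
    ∃ T : Finset α, Set.InjOn (f · ∩ T) K ∧ #T + 1 ≤ #K := by
  obtain ⟨T, -, hinj, hcard⟩ := exists_separating_superset hf ∅
  refine ⟨T, hinj, ?_⟩
  simpa [Finset.image_const hK] using hcard

lemma exists_inter_eq_singleton_of_minimal {S T : Finset α}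
    (hT : Minimal (fun T => T ⊆ S ∧ ∀ i ∈ K, (f i ∩ T).Nonempty) T) {a : α} (ha : a ∈ T) :
    ∃ i ∈ K, f i ∩ T = {a} := by
  by_contra! hpriv
  have herase : T.erase a ⊆ S ∧ ∀ i ∈ K, (f i ∩ T.erase a).Nonempty := by
    refine ⟨(T.erase_subset a).trans hT.1.1, fun i hi => ?_⟩
    by_contra hempty
    refine hpriv i hi ((hT.1.2 i hi).subset_singleton_iff.1 fun b hb => ?_)
    by_contra hba
    exact hempty ⟨b, Finset.mem_inter.2 ⟨(Finset.mem_inter.1 hb).1,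
      Finset.mem_erase.2 ⟨Finset.notMem_singleton.1 hba, (Finset.mem_inter.1 hb).2⟩⟩⟩
  simpa using hT.2 herase (T.erase_subset a) ha

/-- A minimal subfamily `T₀ ⊆ f i₀` meeting every `f i` has a private element for each of its
points, so it already induces `#T₀ + 1` classes; extending it costs at most `#K - #T₀ - 1`. -/
lemma exists_separating_meeting_all (hf : Set.InjOn f K) {i₀ : ι} (hi₀ : i₀ ∈ K)
    (hmeet : ∀ i ∈ K, (f i ∩ f i₀).Nonempty) (hnotall : ∀ a ∈ f i₀, ∃ i ∈ K, a ∉ f i) :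
    ∃ T : Finset α, Set.InjOn (f · ∩ T) K ∧ (∀ i ∈ K, (f i ∩ T).Nonempty) ∧ #T + 1 ≤ #K := by
  obtain ⟨T₀, -, hT₀⟩ := ((f i₀).powerset.filter fun T => ∀ i ∈ K, (f i ∩ T).Nonempty)
    |>.exists_le_minimal (a := f i₀) (by simpa using hmeet)
  replace hT₀ : Minimal (fun T => T ⊆ f i₀ ∧ ∀ i ∈ K, (f i ∩ T).Nonempty) T₀ := by
    simpa using hT₀
  obtain ⟨hT₀sub, hcov⟩ := hT₀.1
  have hnotsingleton : ∀ a, T₀ ≠ {a} := by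
    rintro a rfl
    obtain ⟨i, hi, hai⟩ := hnotall a (hT₀sub (mem_singleton_self a))
    obtain ⟨b, hb⟩ := hcov i hi
    simp_all
  have hclasses : #T₀ + 1 ≤ #(K.image (f · ∩ T₀)) := by
    have hsub : insert T₀ (T₀.image singleton) ⊆ K.image (f · ∩ T₀) := by
      refine Finset.insert_subset
        (Finset.mem_image.2 ⟨i₀, hi₀, Finset.inter_eq_right.2 hT₀sub⟩) fun X hX => ?_
      obtain ⟨a, ha, rfl⟩ := Finset.mem_image.1 hX
      exact Finset.mem_image.2 (exists_inter_eq_singleton_of_minimal hT₀ ha)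
    have hnotmem : T₀ ∉ T₀.image singleton := by
      simpa using fun a _ h => hnotsingleton a h.symm
    simpa [card_insert_of_notMem hnotmem,
      Finset.card_image_of_injective _ Finset.singleton_injective] using Finset.card_le_card hsub
  obtain ⟨T, hT₀T, hinj, hcard⟩ := exists_separating_superset hf T₀
  exact ⟨T, hinj, fun i hi => (hcov i hi).mono (inter_subset_inter_left hT₀T), by omega⟩

end SetSystem

lemma mem_closedNbhd {G : SimpleGraph V} {v w : V} : w ∈ closedNbhd G v ↔ w = v ∨ G.Adj v w :=
  Iff.rfl

lemma inter_eq_of_image_partialInv_eq {A B W : Set V}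
    (h : Function.partialInv ((↑) : W → V) '' A = Function.partialInv ((↑) : W → V) '' B) :
    A ∩ W = B ∩ W := by
  have key : ∀ {A B : Set V}, Function.partialInv ((↑) : W → V) '' A =
      Function.partialInv ((↑) : W → V) '' B → A ∩ W ⊆ B ∩ W := by
    intro A B h w ⟨hwA, hwW⟩
    have hinv := Subtype.val_injective.isPartialInv (α := W)
    obtain ⟨y, hyB, hy⟩ : Function.partialInv ((↑) : W → V) w ∈
        Function.partialInv ((↑) : W → V) '' B := h ▸ ⟨w, hwA, rfl⟩
    obtain rfl : w = y := (hinv ⟨w, hwW⟩ y).1 (hy.trans ((hinv ⟨w, hwW⟩ w).2 rfl))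
    exact ⟨hyB, hwW⟩
  exact (key h).antisymm (key h.symm)

/-- Colour the vertices of `W` with pairwise distinct colours and all others with one more. -/
lemma rlidChromNum_le_card_add_one (G : SimpleGraph V) (W : Finset V)
    (hW : ∀ u v, G.Adj u v → closedNbhd G u ≠ closedNbhd G v →
      closedNbhd G u ∩ W ≠ closedNbhd G v ∩ W) :
    rlidChromNum G ≤ #W + 1 := by
  classical
  let e : Option (W : Set V) ≃ Fin (#W + 1) := Fintype.equivFinOfCardEq (by simp)
  refine Nat.sInf_le ⟨e ∘ Function.partialInv ((↑) : Set.Elem (W : Set V) → V),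
    fun u v huv hne h => ?_⟩
  refine hW u v huv hne (inter_eq_of_image_partialInv_eq ?_)
  rwa [Set.image_comp, Set.image_comp, e.injective.image_injective.eq_iff] at h

lemma IsSplitGraph.exists_maximal_clique [Finite V] {G : SimpleGraph V} (h : IsSplitGraph G) :
    ∃ K : Finset V, G.IsClique (K : Set V) ∧ (∀ u ∉ K, ∀ v ∉ K, ¬G.Adj u v) ∧
      ∀ s ∉ K, ∃ u ∈ K, ¬G.Adj s u := by
  classical
  have := Fintype.ofFinite V
  obtain ⟨K₀, hK₀, hind⟩ := h
  obtain ⟨K, hK₀K, hK, hmax⟩ := Set.Finite.exists_le_maximal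
    (Set.toFinite {K : Finset V | G.IsClique (K : Set V)}) (a := K₀.toFinset) (by simpa using hK₀)
  have hsub : ∀ {u}, u ∉ K → u ∉ K₀ := fun hu h => hu (hK₀K (Set.mem_toFinset.2 h))
  refine ⟨K, hK, fun u hu v hv => hind u (hsub hu) v (hsub hv), fun s hs => ?_⟩
  by_contra! hadj
  have hclique : G.IsClique (insert s K : Finset V) := by
    rw [Finset.coe_insert]
    exact hK.insert fun u hu _ => hadj u hu
  exact hs (hmax hclique (Finset.subset_insert s K) (Finset.mem_insert_self s K))

section SplitGraph

variable [Fintype V] [DecidableEq V] (G : SimpleGraph V) [DecidableRel G.Adj] {K : Finset V}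

def outerNeighbors (K : Finset V) (u : V) : Finset V := G.neighborFinset u \ K

/-- `X` rescues the edges `us`, `u ∈ K`, `s ∉ K`, on which the traces on `T` fail. -/
def IsNonAdjWitnessSet (K T X : Finset V) : Prop :=
  ∀ u ∈ K, ∀ s ∈ outerNeighbors G K u, outerNeighbors G K u ∩ T ⊆ {s} → ∃ x ∈ X, ¬G.Adj s x

variable {G}

@[simp]
lemma mem_outerNeighbors {u s : V} : s ∈ outerNeighbors G K u ↔ G.Adj u s ∧ s ∉ K := by
  simp [outerNeighbors]

lemma mem_closedNbhd_iff_of_mem_clique (hK : G.IsClique (K : Set V)) {u w : V} (hu : u ∈ K) :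
    w ∈ closedNbhd G u ↔ w ∈ K ∨ w ∈ outerNeighbors G K u := by
  rw [mem_closedNbhd, mem_outerNeighbors]
  by_cases hw : w ∈ K
  · simp only [hw, true_or, iff_true]
    by_cases hwu : w = u
    · exact Or.inl hwu
    · exact Or.inr (hK hu hw (Ne.symm hwu))
  · simp only [hw, false_or, not_false_eq_true, and_true]
    exact ⟨fun h => h.resolve_left (by rintro rfl; exact hw hu), Or.inr⟩

lemma injOn_outerNeighbors (htf : TwinFree G) (hK : G.IsClique (K : Set V)) :
    Set.InjOn (outerNeighbors G K) K := fun u hu v hv h => htf u v <| Set.ext fun w => by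
  rw [mem_closedNbhd_iff_of_mem_clique hK hu, mem_closedNbhd_iff_of_mem_clique hK hv, h]

lemma exists_nonAdj_witnesses (hmax : ∀ s ∉ K, ∃ u ∈ K, ¬G.Adj s u) {T : Finset V}
    (hcov : ∀ u ∈ K, (outerNeighbors G K u ∩ T).Nonempty) :
    ∃ X ⊆ K, #X ≤ 2 ∧ IsNonAdjWitnessSet G K T X := by
  have hsingleton : ∀ u ∈ K, ∀ s, outerNeighbors G K u ∩ T ⊆ {s} →
      outerNeighbors G K u ∩ T = {s} := fun u hu s => (hcov u hu).subset_singleton_iff.1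
  by_cases hex : ∃ v ∈ K, ∃ e, outerNeighbors G K v ∩ T = {e}
  · obtain ⟨v, hv, e, he⟩ := hex
    have heK : e ∉ K :=
      (mem_outerNeighbors.1 (Finset.mem_inter.1 (he ▸ mem_singleton_self e)).1).2
    obtain ⟨z, hz, hez⟩ := hmax e heK
    refine ⟨{v, z}, Finset.insert_subset hv (Finset.singleton_subset_iff.2 hz), card_le_two,
      fun u hu s hs hsub => ?_⟩
    by_cases hse : s = e
    · exact ⟨z, by simp, hse ▸ hez⟩
    · refine ⟨v, by simp, fun hsv => hse ?_⟩
      have hsT : s ∈ T := (Finset.mem_inter.1 (hsingleton u hu s hsub ▸ mem_singleton_self s)).2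
      have : s ∈ outerNeighbors G K v ∩ T :=
        Finset.mem_inter.2 ⟨mem_outerNeighbors.2 ⟨hsv.symm, (mem_outerNeighbors.1 hs).2⟩, hsT⟩
      simpa [he] using this
  · exact ⟨∅, Finset.empty_subset K, by simp,
      fun u hu s _ hsub => absurd ⟨u, hu, s, hsingleton u hu s hsub⟩ hex⟩

lemma exists_separating_and_nonAdj_witnesses (hmax : ∀ s ∉ K, ∃ u ∈ K, ¬G.Adj s u)
    (hinj : Set.InjOn (outerNeighbors G K) K) :
    ∃ T X : Finset V, X ⊆ K ∧ #T + #X ≤ #K + 1 ∧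
      Set.InjOn (outerNeighbors G K · ∩ T) K ∧ IsNonAdjWitnessSet G K T X := by
  rcases K.eq_empty_or_nonempty with rfl | hKne
  · exact ⟨∅, ∅, by simp [IsNonAdjWitnessSet]⟩
  by_cases hdisj : ∃ u ∈ K, ∃ w ∈ K, Disjoint (outerNeighbors G K u) (outerNeighbors G K w)
  · obtain ⟨u, hu, w, hw, huw⟩ := hdisj
    obtain ⟨T, hsep, hT⟩ := exists_separating hinj hKne
    refine ⟨T, {u, w}, Finset.insert_subset hu (Finset.singleton_subset_iff.2 hw),
      by have := card_le_two (a := u) (b := w); omega, hsep, fun v _ s hs _ => ?_⟩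
    by_contra! hadj
    have hsK := (mem_outerNeighbors.1 hs).2
    exact Finset.disjoint_left.1 huw (mem_outerNeighbors.2 ⟨(hadj u (by simp)).symm, hsK⟩)
      (mem_outerNeighbors.2 ⟨(hadj w (by simp)).symm, hsK⟩)
  · obtain ⟨u₀, hu₀⟩ := hKne
    obtain ⟨T, hsep, hcov, hT⟩ := exists_separating_meeting_all hinj hu₀
      (fun u hu => Finset.not_disjoint_iff_nonempty_inter.1 fun h => hdisj ⟨u, hu, u₀, hu₀, h⟩)
      fun s hs => by
        obtain ⟨z, hz, hsz⟩ := hmax s (mem_outerNeighbors.1 hs).2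
        exact ⟨z, hz, fun h => hsz (mem_outerNeighbors.1 h).1.symm⟩
    obtain ⟨X, hXK, hX, hwit⟩ := exists_nonAdj_witnesses hmax hcov
    exact ⟨T, X, hXK, by omega, hsep, hwit⟩

lemma outerNeighbors_inter_subset {T W : Finset V} (hTW : T ⊆ W) {u v : V} (hv : v ∈ K)
    (h : closedNbhd G u ∩ W = closedNbhd G v ∩ W) :
    outerNeighbors G K u ∩ T ⊆ outerNeighbors G K v ∩ T := by
  intro t ht
  obtain ⟨htu, htT⟩ := Finset.mem_inter.1 ht
  obtain ⟨hut, htK⟩ := mem_outerNeighbors.1 htu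
  have htv : t ∈ closedNbhd G v ∩ W := h ▸ ⟨Or.inr hut, hTW htT⟩
  obtain rfl | hvt := mem_closedNbhd.1 htv.1
  · exact absurd hv htK
  · exact Finset.mem_inter.2 ⟨mem_outerNeighbors.2 ⟨hvt, htK⟩, htT⟩

lemma closedNbhd_inter_ne_of_mem_of_notMem (hK : G.IsClique (K : Set V))
    (hind : ∀ u ∉ K, ∀ v ∉ K, ¬G.Adj u v) {T X : Finset V} (hXK : X ⊆ K)
    (hwit : IsNonAdjWitnessSet G K T X) {u s : V} (hu : u ∈ K) (hs : s ∉ K) (hus : G.Adj u s) :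
    closedNbhd G u ∩ ↑(T ∪ X) ≠ closedNbhd G s ∩ ↑(T ∪ X) := by
  suffices ∃ w ∈ T ∪ X, w ∈ closedNbhd G u ∧ w ∉ closedNbhd G s by
    obtain ⟨w, hw, hwu, hws⟩ := this
    exact fun h => hws (h ▸ ⟨hwu, hw⟩ : w ∈ closedNbhd G s ∩ ↑(T ∪ X)).1
  have hsu : s ∈ outerNeighbors G K u := mem_outerNeighbors.2 ⟨hus, hs⟩
  by_cases hother : ∃ t ∈ outerNeighbors G K u ∩ T, t ≠ s
  · obtain ⟨t, ht, hts⟩ := hother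
    obtain ⟨htu, htT⟩ := Finset.mem_inter.1 ht
    obtain ⟨hut, htK⟩ := mem_outerNeighbors.1 htu
    refine ⟨t, Finset.mem_union_left X htT, Or.inr hut, ?_⟩
    rintro (rfl | hst)
    exacts [hts rfl, hind s hs t htK hst]
  · obtain ⟨x, hx, hsx⟩ := hwit u hu s hsu fun t ht => by
      by_contra hts
      exact hother ⟨t, ht, by simpa using hts⟩
    have hxK := hXK hx
    refine ⟨x, Finset.mem_union_right T hx, ?_, ?_⟩
    · exact (mem_closedNbhd_iff_of_mem_clique hK hu).2 (Or.inl hxK)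
    · rintro (rfl | hsx')
      exacts [hs hxK, hsx hsx']

lemma closedNbhd_inter_ne_of_adj (hK : G.IsClique (K : Set V))
    (hind : ∀ u ∉ K, ∀ v ∉ K, ¬G.Adj u v) {T X : Finset V} (hXK : X ⊆ K)
    (hsep : Set.InjOn (outerNeighbors G K · ∩ T) K)
    (hwit : IsNonAdjWitnessSet G K T X) {u v : V} (huv : G.Adj u v) :
    closedNbhd G u ∩ ↑(T ∪ X) ≠ closedNbhd G v ∩ ↑(T ∪ X) := by
  by_cases hu : u ∈ K <;> by_cases hv : v ∈ K
  · have hTW := Finset.subset_union_left (s₁ := T) (s₂ := X)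
    exact fun h => huv.ne <| hsep hu hv <| (outerNeighbors_inter_subset hTW hv h).antisymm
      (outerNeighbors_inter_subset hTW hu h.symm)
  · exact closedNbhd_inter_ne_of_mem_of_notMem hK hind hXK hwit hu hv huv
  · exact (closedNbhd_inter_ne_of_mem_of_notMem hK hind hXK hwit hv hu huv.symm).symm
  · exact absurd huv (hind u hu v hv)

end SplitGraph

theorem rlid_split_upper_general {V : Type*} [Fintype V] (G : SimpleGraph V)
    (htf : TwinFree G) (hsplit : IsSplitGraph G) :
    rlidChromNum G ≤ G.cliqueNum + 2 := by
  classical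
  obtain ⟨K, hK, hind, hmax⟩ := hsplit.exists_maximal_clique
  obtain ⟨T, X, hXK, hcard, hsep, hwit⟩ :=
    exists_separating_and_nonAdj_witnesses hmax (injOn_outerNeighbors htf hK)
  calc rlidChromNum G ≤ #(T ∪ X) + 1 := rlidChromNum_le_card_add_one G _
        fun u v huv _ => closedNbhd_inter_ne_of_adj hK hind hXK hsep hwit huv
    _ ≤ #K + 2 := by have := Finset.card_union_le T X; omega
    _ ≤ G.cliqueNum + 2 := by have := hK.card_le_cliqueNum; omega

/-- A finite connected twin-free split graph satisfies
`χ_rlid(G) ≤ ω(G) + 2`. -/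
theorem rlid_split_upper {V : Type*} [Fintype V] (G : SimpleGraph V)
    (hconn : G.Connected) (htf : TwinFree G) (hsplit : IsSplitGraph G) :
    rlidChromNum G ≤ G.cliqueNum + 2 :=
  rlid_split_upper_general G htf hsplit
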